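/- Equality in law of the two products of elementary matrices (Proposition 4.3): Let n ≥ 1 and let α_0,…,α_{n−1} be independent ℂ-valued random variables such that almost surely |α_k| < 1 for 0 ≤ k ≤ n−2 and |α_{n−1}| = 1, and such that the law of each α_k is invariant under every rotation z ↦ e^{iθ}z of ℂ. Then the random n×n matrices Θ^{(0)}(α_0)·Θ^{(1)}(α_1)⋯Θ^{(n−1)}(α_{n−1}) and Ξ^{(0)}(α_0)·Ξ^{(1)}(α_1)⋯Ξ^{(n−1)}(α_{n−1}) have the same distribution. -/

import Mathlib

open MeasureTheory Complex Finset
open scoped Real ComplexConjugate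

noncomputable section

/-- `ρ = sqrt(1 - |a|²)`. -/
def rho (a : ℂ) : ℝ := Real.sqrt (1 - ‖a‖ ^ 2)

/-- `Θ^{(k)}(α) = Id_k ⊕ [[conj α, ρ],[ρ, -α]] ⊕ Id_{n-k-2}`; for `k = n-1` only
the `(k,k)` entry `conj α` remains, encoding `Θ^{(n-1)}(α) = Id_{n-1} ⊕ (conj α)`. -/
def ThetaMat (n k : ℕ) (a : ℂ) : Matrix (Fin n) (Fin n) ℂ :=
  Matrix.of fun i j =>
    if (i : ℕ) = k ∧ (j : ℕ) = k then (starRingEnd ℂ) a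
    else if (i : ℕ) = k ∧ (j : ℕ) = k + 1 then (rho a : ℂ)
    else if (i : ℕ) = k + 1 ∧ (j : ℕ) = k then (rho a : ℂ)
    else if (i : ℕ) = k + 1 ∧ (j : ℕ) = k + 1 then -a
    else if i = j then 1 else 0

/-- `Ξ^{(k)}(α) = Id_k ⊕ [[α, ρ e^{iφ}],[ρ, -conj(α) e^{iφ}]] ⊕ Id_{n-k-2}` with
`e^{iφ} = (1-α)/(1-conj α)`; for `k = n-1` only the `(k,k)` entry `α` remains,
encoding `Ξ^{(n-1)}(α) = Id_{n-1} ⊕ (α)`. -/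
def XiMat (n k : ℕ) (a : ℂ) : Matrix (Fin n) (Fin n) ℂ :=
  Matrix.of fun i j =>
    if (i : ℕ) = k ∧ (j : ℕ) = k then a
    else if (i : ℕ) = k ∧ (j : ℕ) = k + 1 then
      (rho a : ℂ) * ((1 - a) / (1 - (starRingEnd ℂ) a))
    else if (i : ℕ) = k + 1 ∧ (j : ℕ) = k then (rho a : ℂ)
    else if (i : ℕ) = k + 1 ∧ (j : ℕ) = k + 1 then
      -(starRingEnd ℂ) a * ((1 - a) / (1 - (starRingEnd ℂ) a))
    else if i = j then 1 else 0

instance (n : ℕ) : MeasurableSpace (Matrix (Fin n) (Fin n) ℂ) :=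
  MeasurableSpace.pi
/-!
For `|c| = 1`, conjugating by diagonal phase matrices gives
`D_k(c) Ξ^{(k)}(a) = Θ^{(k)}(conj (c a)) D_{k+1}(c e^{iφ(a)})`, where `D_k(c)` is the identity
with `c` in position `k`. Telescoping from `D_0 = 1` to `D_n = 1` turns the product of the
`Ξ^{(k)}(a_k)` into the product of the `Θ^{(k)}(b_k)` with
`b_k = conj (a_k ∏_{j<k} e^{iφ(a_j)})`, as long as `a_k ≠ 1` for `k ≤ n - 2`.

The change of variables `a ↦ b` is triangular: given `a_0, …, a_{k-1}` it acts on `a_k` by a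
reflection `z ↦ c conj z` with `|c| = 1`. A rotation-invariant law has a radial characteristic
function, so it is invariant under these reflections too; hence `a ↦ b` preserves the product of
the laws of the `α_k`, which by independence is the joint law of `(α_0, …, α_{n-1})`.
-/

def xiPhase (a : ℂ) : ℂ := (1 - a) / (1 - conj a)

theorem norm_xiPhase {a : ℂ} (ha : a ≠ 1) : ‖xiPhase a‖ = 1 := by
  have h : 1 - a ≠ 0 := sub_ne_zero.2 (Ne.symm ha)
  rw [xiPhase, norm_div, show 1 - conj a = conj (1 - a) by simp, Complex.norm_conj,
    div_self (norm_ne_zero_iff.2 h)]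

theorem norm_prod_xiPhase {n : ℕ} {a : Fin n → ℂ} (ha : ∀ j, a j ≠ 1) :
    ‖∏ j, xiPhase (a j)‖ = 1 := by
  simp [norm_xiPhase, ha]

def phaseDiag (n m : ℕ) (c : ℂ) : Matrix (Fin n) (Fin n) ℂ :=
  Matrix.diagonal fun i => if (i : ℕ) = m then c else 1

theorem phaseDiag_of_le {n m : ℕ} (h : n ≤ m) (c : ℂ) : phaseDiag n m c = 1 := by
  rw [phaseDiag, ← Matrix.diagonal_one]
  congr with i
  rw [if_neg (by omega)]

theorem phaseDiag_mul_XiMat {c : ℂ} (hc : ‖c‖ = 1) (n m : ℕ) (a : ℂ) :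
    phaseDiag n m c * XiMat n m a
      = ThetaMat n m (conj (c * a)) * phaseDiag n (m + 1) (c * xiPhase a) := by
  have hcc : conj c * c = 1 := by
    rw [← Complex.normSq_eq_conj_mul_self, Complex.normSq_eq_norm_sq, hc]; norm_num
  have hρ : rho (conj c * conj a) = rho a := by
    rw [rho, rho, norm_mul, Complex.norm_conj, Complex.norm_conj, hc, one_mul]
  ext i j
  simp only [phaseDiag, Matrix.diagonal_mul, Matrix.mul_diagonal, XiMat, ThetaMat,
    Matrix.of_apply, map_mul, hρ, Complex.conj_conj, ← xiPhase.eq_1]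
  split_ifs <;> first | omega | ring1 | linear_combination (conj a * xiPhase a) * hcc

def xiTwist {n : ℕ} (a : Fin n → ℂ) (k : Fin n) : ℂ :=
  conj ((∏ j ∈ Finset.Iio k, xiPhase (a j)) * a k)

theorem xiTwist_castSucc {n : ℕ} (a : Fin (n + 1) → ℂ) (k : Fin n) :
    xiTwist a k.castSucc = xiTwist (Fin.init a) k := by
  rw [xiTwist, xiTwist, Fin.Iio_castSucc, Finset.prod_map]
  rfl

theorem xiTwist_last {n : ℕ} (a : Fin (n + 1) → ℂ) :
    xiTwist a (Fin.last n) = conj ((∏ j, xiPhase (Fin.init a j)) * a (Fin.last n)) := by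
  rw [xiTwist, Fin.Iio_last_eq_map, Finset.prod_map]
  rfl

theorem xiTwist_eq_snoc {n : ℕ} (a : Fin (n + 1) → ℂ) :
    xiTwist a = Fin.snoc (xiTwist (Fin.init a))
      (conj (∏ j, xiPhase (Fin.init a j)) * conj (a (Fin.last n))) := by
  funext k
  cases k using Fin.lastCases <;> simp [xiTwist_castSucc, xiTwist_last]

theorem prod_ThetaMat_xiTwist_mul_phaseDiag (N : ℕ) {t : ℕ} (a : Fin t → ℂ)
    (ha : ∀ j : Fin t, (j : ℕ) + 1 < t → a j ≠ 1) :
    (List.ofFn fun k => ThetaMat N k (xiTwist a k)).prod * phaseDiag N t (∏ j, xiPhase (a j))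
      = (List.ofFn fun k => XiMat N k (a k)).prod := by
  induction t with
  | zero => simp [phaseDiag]
  | succ t ih =>
    have hc : ‖∏ j, xiPhase (Fin.init a j)‖ = 1 :=
      norm_prod_xiPhase fun j => ha j.castSucc (by simp)
    rw [List.ofFn_succ', List.ofFn_succ', List.prod_concat, List.prod_concat,
      Fin.prod_univ_castSucc]
    simp only [xiTwist_castSucc, xiTwist_last, Fin.val_last, Fin.val_castSucc]
    rw [mul_assoc,
      show ∏ i : Fin t, xiPhase (a i.castSucc) = ∏ j, xiPhase (Fin.init a j) from rfl,
      ← phaseDiag_mul_XiMat hc, ← mul_assoc]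
    congr 1
    exact ih (Fin.init a) fun j _ => ha j.castSucc (by simp)

def thetaProd (n : ℕ) (a : Fin n → ℂ) : Matrix (Fin n) (Fin n) ℂ :=
  ((List.finRange n).map fun k => ThetaMat n k.val (a k)).prod

def xiProd (n : ℕ) (a : Fin n → ℂ) : Matrix (Fin n) (Fin n) ℂ :=
  ((List.finRange n).map fun k => XiMat n k.val (a k)).prod

theorem xiProd_eq_thetaProd_xiTwist {n : ℕ} (a : Fin n → ℂ)
    (ha : ∀ j : Fin n, (j : ℕ) + 1 < n → a j ≠ 1) :
    xiProd n a = thetaProd n (xiTwist a) := by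
  rw [xiProd, thetaProd, ← List.ofFn_eq_map, ← List.ofFn_eq_map,
    ← prod_ThetaMat_xiTwist_mul_phaseDiag n a ha, phaseDiag_of_le le_rfl, mul_one]

theorem charFun_map_eq_of_inner {E F : Type*} [NormedAddCommGroup E] [InnerProductSpace ℝ E]
    [MeasurableSpace E] [OpensMeasurableSpace E] [NormedAddCommGroup F] [InnerProductSpace ℝ F]
    [MeasurableSpace F] {μ : Measure F} {f : F → E} (hf : Measurable f) {s : F} {t : E}
    (h : ∀ x, inner ℝ (f x) t = inner ℝ x s) :
    charFun (μ.map f) t = charFun μ s := by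
  rw [charFun_apply, charFun_apply, integral_map hf.aemeasurable (by fun_prop)]
  simp_rw [h]

def IsRotationInvariant (ν : Measure ℂ) : Prop :=
  ∀ θ : ℝ, ν.map (fun z => Complex.exp (Complex.I * θ) * z) = ν

namespace IsRotationInvariant

variable {ν : Measure ℂ}

theorem map_mul_left_eq_self (h : IsRotationInvariant ν) {c : ℂ} (hc : ‖c‖ = 1) :
    ν.map (c * ·) = ν := by
  convert h (Complex.arg c)
  rw [mul_comm, ← one_mul (Complex.exp _), ← Complex.ofReal_one, ← hc,
    Complex.norm_mul_exp_arg_mul_I]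

theorem charFun_eq (h : IsRotationInvariant ν) {s t : ℂ} (hst : ‖s‖ = ‖t‖) :
    charFun ν s = charFun ν t := by
  rcases eq_or_ne t 0 with rfl | ht
  · rw [norm_zero, norm_eq_zero] at hst
    rw [hst]
  have hc : ‖conj (s / t)‖ = 1 := by
    rw [Complex.norm_conj, norm_div, hst, div_self (norm_ne_zero_iff.2 ht)]
  have hinner (x : ℂ) : inner ℝ (conj (s / t) * x) t = inner ℝ x s := by
    rw [Complex.inner, Complex.inner, map_mul, Complex.conj_conj]
    field_simp
  rw [← charFun_map_eq_of_inner (by fun_prop) hinner, h.map_mul_left_eq_self hc]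

theorem map_mul_conj_eq_self [IsFiniteMeasure ν] (h : IsRotationInvariant ν) {c : ℂ}
    (hc : ‖c‖ = 1) : ν.map (fun z => c * conj z) = ν := by
  refine Measure.ext_of_charFun (funext fun t => ?_)
  have hinner (x : ℂ) : inner ℝ (c * conj x) t = inner ℝ x (c * conj t) := by
    rw [Complex.inner, Complex.inner, ← Complex.conj_re]
    simp only [map_mul, Complex.conj_conj]
    ring_nf
  rw [charFun_map_eq_of_inner (by fun_prop) hinner]
  exact h.charFun_eq (by simp [hc])

end IsRotationInvariant

theorem measurePreserving_snoc_init {α : Type*} [MeasurableSpace α] {n : ℕ}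
    {μ μ' : Fin (n + 1) → Measure α} [∀ i, SigmaFinite (μ i)] [∀ i, SigmaFinite (μ' i)]
    {f : (Fin n → α) → Fin n → α}
    (hf : MeasurePreserving f (Measure.pi fun i => μ i.castSucc)
      (Measure.pi fun i => μ' i.castSucc))
    {g : (Fin n → α) → α → α} (hg : Measurable (Function.uncurry g))
    (hgμ : ∀ᵐ y ∂Measure.pi (fun i => μ i.castSucc),
      (μ (Fin.last n)).map (g y) = μ' (Fin.last n)) :
    MeasurePreserving (fun z => Fin.snoc (f (Fin.init z)) (g (Fin.init z) (z (Fin.last n))))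
      (Measure.pi μ) (Measure.pi μ') := by
  have he := measurePreserving_piFinSuccAbove μ (Fin.last n)
  have he' := measurePreserving_piFinSuccAbove μ' (Fin.last n)
  simp only [Fin.succAbove_last] at he he'
  have hskew := (Measure.measurePreserving_swap.comp (hf.skew_product hg hgμ)).comp
    Measure.measurePreserving_swap
  convert (he'.symm _).comp (hskew.comp he) using 1
  funext z
  simp [MeasurableEquiv.piFinSuccAbove, Fin.snocEquiv]

@[fun_prop]
theorem measurable_xiPhase : Measurable xiPhase := by
  unfold xiPhase; fun_prop

theorem measurable_xiTwist {n : ℕ} : Measurable (xiTwist (n := n)) :=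
  measurable_pi_lambda _ fun k => by unfold xiTwist; fun_prop

theorem measurePreserving_xiTwist {n : ℕ} (ν : Fin n → Measure ℂ)
    [∀ k, IsFiniteMeasure (ν k)] (hrot : ∀ k, IsRotationInvariant (ν k))
    (hne : ∀ k : Fin n, (k : ℕ) + 1 < n → ∀ᵐ z ∂ν k, z ≠ 1) :
    MeasurePreserving xiTwist (Measure.pi ν) (Measure.pi ν) := by
  induction n with
  | zero =>
    rw [Subsingleton.elim (xiTwist (n := 0)) id]
    exact .id _
  | succ n ih =>
    have hinit := ih (fun i => ν i.castSucc) (fun i => hrot _) fun i _ => hne _ (by simp)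
    have hunit : ∀ᵐ y ∂Measure.pi (fun i : Fin n => ν i.castSucc),
        ‖conj (∏ j, xiPhase (y j))‖ = 1 := by
      have hy : ∀ᵐ y ∂Measure.pi (fun i : Fin n => ν i.castSucc), ∀ j, y j ≠ 1 :=
        ae_all_iff.2 fun j =>
          (Measure.tendsto_eval_ae_ae (μ := fun i : Fin n => ν i.castSucc) (i := j)).eventually
            (hne j.castSucc (by simp))
      filter_upwards [hy] with y hy
      rw [Complex.norm_conj, norm_prod_xiPhase hy]
    rw [funext xiTwist_eq_snoc]
    exact measurePreserving_snoc_init hinit (by fun_prop)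
      (hunit.mono fun y hy => (hrot _).map_mul_conj_eq_self hy)

instance (n : ℕ) : MeasurableMul₂ (Matrix (Fin n) (Fin n) ℂ) where
  measurable_mul := measurable_pi_lambda _ fun i => measurable_pi_lambda _ fun j => by
    simp only [Matrix.mul_apply]
    exact Finset.measurable_sum _ fun k _ => by fun_prop

@[fun_prop]
theorem measurable_rho : Measurable rho := by
  unfold rho; fun_prop

theorem measurable_ThetaMat (n k : ℕ) : Measurable (ThetaMat n k) :=
  measurable_pi_lambda _ fun i => measurable_pi_lambda _ fun j => by
    simp only [ThetaMat, Matrix.of_apply]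
    split_ifs <;> fun_prop

theorem measurable_prod_finRange_map {β M : Type*} [MeasurableSpace β] [Monoid M]
    [MeasurableSpace M] [MeasurableMul₂ M] {n : ℕ} {f : ℕ → β → M}
    (hf : ∀ k, Measurable (f k)) :
    Measurable fun a : Fin n → β => ((List.finRange n).map fun k => f k.val (a k)).prod := by
  have h := List.measurable_fun_prod
    ((List.finRange n).map fun k (a : Fin n → β) => f k.val (a k)) <| by
      simp only [List.mem_map]
      rintro _ ⟨k, -, rfl⟩
      exact (hf k).comp (measurable_pi_apply k)
  simpa only [List.map_map, Function.comp_def] using h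

theorem ne_one_of_norm_lt_one {z : ℂ} (hz : ‖z‖ < 1) : z ≠ 1 := by
  rintro rfl
  simp at hz

/-- **Proposition 4.3**: if `α₀,…,α_{n-1}` are independent, rotation-invariant
ℂ-valued random variables with `|α_k| < 1` a.s. for `k ≤ n-2` and
`|α_{n-1}| = 1` a.s., then
`Θ⁽⁰⁾(α₀)⋯Θ⁽ⁿ⁻¹⁾(α_{n-1})` and `Ξ⁽⁰⁾(α₀)⋯Ξ⁽ⁿ⁻¹⁾(α_{n-1})`
have the same distribution. -/
theorem theta_prod_eq_law_xi_prod
    {Ω : Type*} [MeasurableSpace Ω] (P : Measure Ω) [IsProbabilityMeasure P]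
    (n : ℕ) (hn : 1 ≤ n) (α : Fin n → Ω → ℂ)
    (hmeas : ∀ k, Measurable (α k))
    (hindep : ProbabilityTheory.iIndepFun α P)
    (habs : ∀ᵐ ω ∂P,
      (∀ k : Fin n, (k : ℕ) + 1 < n → ‖α k ω‖ < 1) ∧
        ‖α ⟨n - 1, by omega⟩ ω‖ = 1)
    (hrot : ∀ (k : Fin n) (θ : ℝ),
      Measure.map (fun z : ℂ => Complex.exp (Complex.I * θ) * z)
          (Measure.map (α k) P) = Measure.map (α k) P) :
    Measure.map
        (fun ω => ((List.finRange n).map fun k => ThetaMat n k.val (α k ω)).prod) P =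
      Measure.map
        (fun ω => ((List.finRange n).map fun k => XiMat n k.val (α k ω)).prod) P := by
  set ν : Fin n → Measure ℂ := fun k => P.map (α k)
  have hν (k : Fin n) : IsProbabilityMeasure (ν k) :=
    Measure.isProbabilityMeasure_map (hmeas k).aemeasurable
  have hα : Measurable fun ω k => α k ω := measurable_pi_lambda _ hmeas
  have hlaw : P.map (fun ω k => α k ω) = Measure.pi ν :=
    hindep.map_fun_eq_pi_map fun k => (hmeas k).aemeasurable
  have hne (k : Fin n) (hk : (k : ℕ) + 1 < n) : ∀ᵐ z ∂ν k, z ≠ 1 := by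
    refine (ae_map_iff (hmeas k).aemeasurable (measurableSet_singleton 1).compl).2 ?_
    filter_upwards [habs] with ω hω
    exact ne_one_of_norm_lt_one (hω.1 k hk)
  have hθ : Measurable (thetaProd n) := measurable_prod_finRange_map (measurable_ThetaMat n)
  change P.map (thetaProd n ∘ fun ω k => α k ω) = P.map (xiProd n ∘ fun ω k => α k ω)
  calc P.map (thetaProd n ∘ fun ω k => α k ω)
      = (Measure.pi ν).map (thetaProd n) := by rw [← hlaw, Measure.map_map hθ hα]
    _ = (Measure.pi ν).map (thetaProd n ∘ xiTwist) := by
      rw [← Measure.map_map hθ measurable_xiTwist,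
        (measurePreserving_xiTwist ν hrot hne).map_eq]
    _ = P.map (thetaProd n ∘ xiTwist ∘ fun ω k => α k ω) := by
      rw [← hlaw, Measure.map_map (hθ.comp measurable_xiTwist) hα]
      rfl
    _ = P.map (xiProd n ∘ fun ω k => α k ω) := by
      refine Measure.map_congr (habs.mono fun ω hω => ?_)
      exact (xiProd_eq_thetaProd_xiTwist _ fun k hk => ne_one_of_norm_lt_one (hω.1 k hk)).symm
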